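/- arXiv:quant-ph/0212109 — 4 statements merged into one kernel-verified Lean document; each statement's English description precedes it below -/
import Mathlib

section
/- For every real γ, (-i) · (exp(-iπ/2 σ_z) exp(iπ/2 σ_y) ⊗ I) · exp(γ(i/2) σ_z⊗σ_z) · (exp(-iπ/2 σ_y) ⊗ exp(-iπ/2 σ_z)) = exp((π−γ)(i/2) σ_z⊗σ_z). -/
open Matrix Kronecker

noncomputable section

def σx : Matrix (Fin 2) (Fin 2) ℂ := !![0, 1; 1, 0]
def σy : Matrix (Fin 2) (Fin 2) ℂ := !![0, -Complex.I; Complex.I, 0]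
def σz : Matrix (Fin 2) (Fin 2) ℂ := !![1, 0; 0, -1]

/-- matrix exponential over ℂ. -/
def mexp {n : Type*} [Fintype n] [DecidableEq n]
    (A : Matrix n n ℂ) : Matrix n n ℂ := NormedSpace.exp A

/-!
For an involution `A`, the exponential series splits into its even and odd parts, giving
`exp (θ i • A) = cos θ • 1 + i sin θ • A`. Hence the local gates at `±π/2` are `±i` times Pauli
matrices and the `σz ⊗ σz` gate is `cos (γ/2) + i sin (γ/2) σz ⊗ σz`. Conjugation by the local
Pauli products sends `1 ↦ σz ⊗ σz` and `σz ⊗ σz ↦ -1` (because `σy` and `σz` anticommute), which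
together with the global phase `-i` trades `cos (γ/2), sin (γ/2)` for
`sin (γ/2) = cos ((π - γ)/2), cos (γ/2) = sin ((π - γ)/2)`.
-/

namespace NormedSpace

section Involution

variable {𝔸 : Type*} [Ring 𝔸] [Algebra ℂ 𝔸] [TopologicalSpace 𝔸] [IsTopologicalRing 𝔸]
  [ContinuousSMul ℂ 𝔸] [T2Space 𝔸] {A : 𝔸}

theorem exp_smul_of_mul_self_eq_one (hA : A * A = 1) (z : ℂ) :
    exp (z • A) = Complex.cosh z • 1 + Complex.sinh z • A := by
  have hA_even : ∀ n : ℕ, A ^ (2 * n) = 1 := fun n => by rw [pow_mul, sq, hA, one_pow]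
  rw [exp_eq_tsum ℂ]
  refine HasSum.tsum_eq (HasSum.even_add_odd ?_ ?_)
  · convert (Complex.hasSum_cosh z).smul_const (1 : 𝔸) using 2 with n
    rw [smul_pow, hA_even, smul_smul, div_eq_inv_mul]
  · convert (Complex.hasSum_sinh z).smul_const A using 2 with n
    rw [smul_pow, pow_succ A, hA_even, one_mul, smul_smul, div_eq_inv_mul]

theorem exp_mul_I_smul_of_mul_self_eq_one (hA : A * A = 1) (θ : ℂ) :
    exp ((θ * Complex.I) • A) = Complex.cos θ • 1 + (Complex.sin θ * Complex.I) • A := by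
  rw [exp_smul_of_mul_self_eq_one hA, Complex.cosh_mul_I, Complex.sinh_mul_I]

theorem exp_mul_I_div_two_smul_of_mul_self_eq_one (hA : A * A = 1) (x : ℂ) :
    exp ((x * (Complex.I / 2)) • A) =
      Complex.cos (x / 2) • 1 + (Complex.sin (x / 2) * Complex.I) • A := by
  rw [← exp_mul_I_smul_of_mul_self_eq_one hA, div_mul_eq_mul_div, mul_div_assoc]

theorem exp_I_mul_pi_div_two_smul_of_mul_self_eq_one (hA : A * A = 1) :
    exp ((Complex.I * (Real.pi / 2 : ℝ)) • A) = Complex.I • A := by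
  rw [mul_comm, Complex.ofReal_div, Complex.ofReal_ofNat, exp_mul_I_smul_of_mul_self_eq_one hA,
    Complex.cos_pi_div_two, Complex.sin_pi_div_two, zero_smul, zero_add, one_mul]

theorem exp_neg_I_mul_pi_div_two_smul_of_mul_self_eq_one (hA : A * A = 1) :
    exp ((-Complex.I * (Real.pi / 2 : ℝ)) • A) = (-Complex.I) • A := by
  rw [neg_mul, mul_comm, ← neg_mul, Complex.ofReal_div, Complex.ofReal_ofNat,
    exp_mul_I_smul_of_mul_self_eq_one hA, Complex.cos_neg, Complex.sin_neg,
    Complex.cos_pi_div_two, Complex.sin_pi_div_two, zero_smul, zero_add, neg_one_mul]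

end Involution

end NormedSpace

open NormedSpace Complex

theorem σy_mul_self : σy * σy = 1 := by
  simp [σy, Matrix.one_fin_two]

theorem σz_mul_self : σz * σz = 1 := by
  simp [σz, Matrix.one_fin_two]

theorem σy_mul_σz : σy * σz = -(σz * σy) := by
  simp [σy, σz]

theorem Matrix.kronecker_mul_self_eq_one {m n : Type*} [Fintype m] [Fintype n] [DecidableEq m]
    [DecidableEq n] {A : Matrix m m ℂ} {B : Matrix n n ℂ} (hA : A * A = 1) (hB : B * B = 1) :
    (A ⊗ₖ B) * (A ⊗ₖ B) = 1 := by
  rw [← mul_kronecker_mul, hA, hB, one_kronecker_one]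

theorem σzσy_kronecker_one_mul_σy_kronecker_σz :
    (σz * σy) ⊗ₖ (1 : Matrix (Fin 2) (Fin 2) ℂ) * (σy ⊗ₖ σz) = σz ⊗ₖ σz := by
  rw [← mul_kronecker_mul, mul_assoc, σy_mul_self, Matrix.mul_one, Matrix.one_mul]

theorem σzσy_kronecker_one_mul_σz_kronecker_σz_mul_σy_kronecker_σz :
    (σz * σy) ⊗ₖ (1 : Matrix (Fin 2) (Fin 2) ℂ) * (σz ⊗ₖ σz) * (σy ⊗ₖ σz) = -1 := by
  rw [← mul_kronecker_mul, ← mul_kronecker_mul, Matrix.one_mul, σz_mul_self, mul_assoc σz,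
    σy_mul_σz, Matrix.mul_neg, ← mul_assoc, σz_mul_self, Matrix.one_mul, neg_mul, σy_mul_self,
    ← neg_one_smul ℂ (1 : Matrix (Fin 2) (Fin 2) ℂ), smul_kronecker, one_kronecker_one,
    neg_one_smul]

theorem stmt3 (γ : ℝ) :
    (-Complex.I) •
        (((mexp ((-Complex.I * (Real.pi / 2 : ℝ)) • σz) *
            mexp ((Complex.I * (Real.pi / 2 : ℝ)) • σy)) ⊗ₖ (1 : Matrix (Fin 2) (Fin 2) ℂ)) *
          mexp (((γ : ℂ) * (Complex.I / 2)) • (σz ⊗ₖ σz)) *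
          (mexp ((-Complex.I * (Real.pi / 2 : ℝ)) • σy) ⊗ₖ
            mexp ((-Complex.I * (Real.pi / 2 : ℝ)) • σz))) =
      mexp ((((Real.pi - γ : ℝ) : ℂ) * (Complex.I / 2)) • (σz ⊗ₖ σz)) := by
  have hZZ := Matrix.kronecker_mul_self_eq_one σz_mul_self σz_mul_self
  simp only [mexp]
  rw [exp_neg_I_mul_pi_div_two_smul_of_mul_self_eq_one σz_mul_self,
    exp_I_mul_pi_div_two_smul_of_mul_self_eq_one σy_mul_self,
    exp_neg_I_mul_pi_div_two_smul_of_mul_self_eq_one σy_mul_self,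
    exp_mul_I_div_two_smul_of_mul_self_eq_one hZZ, exp_mul_I_div_two_smul_of_mul_self_eq_one hZZ,
    ofReal_sub, sub_div, cos_pi_div_two_sub, sin_pi_div_two_sub]
  simp only [smul_kronecker, kronecker_smul, mul_add, add_mul, smul_mul_assoc, mul_smul_comm,
    Matrix.mul_one, smul_add, smul_smul]
  rw [σzσy_kronecker_one_mul_σy_kronecker_σz,
    σzσy_kronecker_one_mul_σz_kronecker_σz_mul_σy_kronecker_σz]
  match_scalars <;> ring_nf <;> simp [I_sq]
end
end

section
/- Let γ ∈ (0, π/2), c ∈ (0, π/2], b ∈ [0, π] with cos c = sin²γ cos b + cos²γ, and p, q as above: p = sqrt((1 + tan(c/2)/tan γ)/2), q = sqrt((1 − tan(c/2)/tan γ)/2) (assume the radicands are nonnegative). Then p·q = cos(b/2)/(2 cos(c/2)). -/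
open Matrix Kronecker

noncomputable section

/- Since `p² = (1 + t)/2` and `q² = (1 - t)/2` with `t = tan(c/2)/tan γ`, one has
`(pq)² = (1 - t²)/4`. The relation `cos c = sin²γ cos b + cos²γ` is, in half angles,
`sin(c/2) = sin γ sin(b/2)`, which turns `1 - t²` into `cos²(b/2)/cos²(c/2)`. -/

namespace Real

theorem sin_sq_half (x : ℝ) : sin (x / 2) ^ 2 = (1 - cos x) / 2 := by
  have h := cos_sq (x / 2)
  rw [show 2 * (x / 2) = x by ring] at h
  linarith [sin_sq_add_cos_sq (x / 2)]

theorem sin_sq_half_eq_of_cos_eq {γ c b : ℝ}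
    (h : cos c = sin γ ^ 2 * cos b + cos γ ^ 2) :
    sin (c / 2) ^ 2 = sin γ ^ 2 * sin (b / 2) ^ 2 := by
  rw [sin_sq_half, sin_sq_half, h]
  linear_combination (-1 / 2 : ℝ) * sin_sq_add_cos_sq γ

theorem one_add_mul_one_sub_tan_half_div_tan {γ c b : ℝ}
    (hsγ : sin γ ≠ 0) (hc : cos (c / 2) ≠ 0)
    (h : sin (c / 2) ^ 2 = sin γ ^ 2 * sin (b / 2) ^ 2) :
    (1 + tan (c / 2) / tan γ) * (1 - tan (c / 2) / tan γ) =
      cos (b / 2) ^ 2 / cos (c / 2) ^ 2 := by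
  rw [tan_eq_sin_div_cos, tan_eq_sin_div_cos]
  field_simp
  linear_combination (-1) * (sin (c / 2) ^ 2 * sin_sq_add_cos_sq γ
    - sin γ ^ 2 * sin_sq_add_cos_sq (c / 2) + h + sin γ ^ 2 * sin_sq_add_cos_sq (b / 2))

end Real

theorem stmt10_general (γ c b : ℝ) (hγ : γ ∈ Set.Ioo 0 (Real.pi / 2))
    (hc : c ∈ Set.Ioc 0 (Real.pi / 2)) (hb : b ∈ Set.Icc 0 Real.pi)
    (hcb : Real.cos c = (Real.sin γ) ^ 2 * Real.cos b + (Real.cos γ) ^ 2)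
    (hrad1 : 0 ≤ 1 + Real.tan (c / 2) / Real.tan γ)
    (p q : ℝ)
    (hp : p = Real.sqrt ((1 + Real.tan (c / 2) / Real.tan γ) / 2))
    (hq : q = Real.sqrt ((1 - Real.tan (c / 2) / Real.tan γ) / 2)) :
    p * q = Real.cos (b / 2) / (2 * Real.cos (c / 2)) := by
  have hpi := Real.pi_pos
  have hsγ : Real.sin γ ≠ 0 :=
    (Real.sin_pos_of_pos_of_lt_pi hγ.1 (by linarith [hγ.2])).ne'
  have hcc : 0 < Real.cos (c / 2) :=
    Real.cos_pos_of_mem_Ioo ⟨by linarith [hc.1], by linarith [hc.2]⟩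
  have hcb_nonneg : 0 ≤ Real.cos (b / 2) :=
    Real.cos_nonneg_of_mem_Icc ⟨by linarith [hb.1], by linarith [hb.2]⟩
  have hpq : (1 + Real.tan (c / 2) / Real.tan γ) / 2 * ((1 - Real.tan (c / 2) / Real.tan γ) / 2)
      = (Real.cos (b / 2) / (2 * Real.cos (c / 2))) ^ 2 := by
    have := Real.one_add_mul_one_sub_tan_half_div_tan hsγ hcc.ne'
      (Real.sin_sq_half_eq_of_cos_eq hcb)
    rw [div_pow, mul_pow, div_mul_div_comm, this]
    field_simp
  rw [hp, hq, ← Real.sqrt_mul (by linarith), hpq, Real.sqrt_sq (by positivity)]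

theorem stmt10 (γ c b : ℝ) (hγ : γ ∈ Set.Ioo 0 (Real.pi / 2))
    (hc : c ∈ Set.Ioc 0 (Real.pi / 2)) (hb : b ∈ Set.Icc 0 Real.pi)
    (hcb : Real.cos c = (Real.sin γ) ^ 2 * Real.cos b + (Real.cos γ) ^ 2)
    (hrad1 : 0 ≤ 1 + Real.tan (c / 2) / Real.tan γ)
    (hrad2 : 0 ≤ 1 - Real.tan (c / 2) / Real.tan γ)
    (p q : ℝ)
    (hp : p = Real.sqrt ((1 + Real.tan (c / 2) / Real.tan γ) / 2))
    (hq : q = Real.sqrt ((1 - Real.tan (c / 2) / Real.tan γ) / 2)) :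
    p * q = Real.cos (b / 2) / (2 * Real.cos (c / 2)) :=
  stmt10_general γ c b hγ hc hb hcb hrad1 p q hp hq

end
end

section
/- Let γ ∈ [π/4, π/2], c ∈ (0, π/2], b = arccos((cos c − cos²γ)/sin²γ), p = sqrt((1 + tan(c/2)/tan γ)/2), q = sqrt((1 − tan(c/2)/tan γ)/2), U₁ = [[ip, iq], [−q, p]], U₂ = [[ip, −q], [−iq, −p]]. Then U₁ · exp(i(γ/2)σ_z) · exp((b+π)(i/2)σ_y) · exp(i(γ/2)σ_z) · U₂ = exp(i(c/2)σ_z) as 2×2 matrices. -/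
open Matrix Kronecker

noncomputable section

/-!
Write `p = cos (χ/2)` and `q = sin (χ/2)`, so that `(p² - q², 2pq) = (cos χ, sin χ)`. Multiplying out,
the product equals `exp(i(c/2)σ_z)` as soon as `sin (b/2) sin γ = sin (c/2)` and
`(sin (b/2) cos γ, cos (b/2)) = cos (c/2) • (cos χ, sin χ)`. The first identity is the half-angle form of
the spherical law of cosines defining `b`; it also gives that vector the length `cos (c/2)`, and
`tan (c/2) / tan γ = sin (b/2) cos γ / cos (c/2)` is its normalised first coordinate, which is how `p`
and `q` are chosen.
-/

open Complex in
lemma mexp_smul_σz (z : ℂ) : mexp (z • σz) = !![exp z, 0; 0, exp (-z)] := by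
  have hdiag : z • σz = diagonal ![z, -z] := by
    ext i j
    fin_cases i <;> fin_cases j <;> simp [σz]
  rw [mexp, hdiag, Matrix.exp_diagonal]
  ext i j
  fin_cases i <;> fin_cases j <;> simp [exp_eq_exp_ℂ, Pi.coe_exp]

open Complex in
lemma mexp_smul_σy (z : ℂ) : mexp (z • σy) = !![cosh z, -I * sinh z; I * sinh z, cosh z] := by
  -- `P` diagonalises `σy`: its columns are the eigenvectors `(1, i)` and `(1, -i)`.
  let P : Matrix (Fin 2) (Fin 2) ℂ := !![1, 1; I, -I]
  let Q : Matrix (Fin 2) (Fin 2) ℂ := !![1/2, -I/2; 1/2, I/2]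
  have hPQ : P * Q = 1 := by
    simp only [P, Q, Matrix.mul_fin_two, Matrix.one_fin_two]
    ring_nf
    simp
  have hconj : z • σy = P * (z • σz) * P⁻¹ := by
    rw [Matrix.inv_eq_right_inv hPQ]
    ext i j
    fin_cases i <;> fin_cases j <;> simp [P, Q, σy, σz] <;> ring_nf
  rw [mexp, hconj, Matrix.exp_conj P _ (.of_mul_eq_one Q hPQ), ← mexp, mexp_smul_σz,
    Matrix.inv_eq_right_inv hPQ, cosh, sinh]
  simp only [P, Q, Matrix.mul_fin_two]
  ring_nf
  simp
  ring

lemma mexp_I_mul_smul_σz (θ : ℝ) :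
    mexp ((Complex.I * θ) • σz) =
      !![Real.cos θ + Real.sin θ * Complex.I, 0; 0, Real.cos θ - Real.sin θ * Complex.I] := by
  rw [mexp_smul_σz, mul_comm, Complex.exp_mul_I, ← neg_mul, ← Complex.ofReal_neg, Complex.exp_mul_I]
  simp [sub_eq_add_neg]

lemma mexp_mul_I_smul_σy (θ : ℝ) :
    mexp ((θ * Complex.I) • σy) = !![(Real.cos θ : ℂ), Real.sin θ; -Real.sin θ, Real.cos θ] := by
  rw [mexp_smul_σy, Complex.cosh_mul_I, Complex.sinh_mul_I]
  ext i j
  fin_cases i <;> fin_cases j <;> simp <;> ring_nf <;> simp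

open Real

lemma sin_half_arccos {x : ℝ} (h₁ : -1 ≤ x) (h₂ : x ≤ 1) : sin (arccos x / 2) = √((1 - x) / 2) := by
  rw [sin_half_eq_sqrt (arccos_nonneg x) (by linarith [arccos_le_pi x, pi_pos]), cos_arccos h₁ h₂]

lemma cos_half_arccos_nonneg (x : ℝ) : 0 ≤ cos (arccos x / 2) :=
  cos_nonneg_of_mem_Icc ⟨by linarith [arccos_nonneg x, pi_pos], by linarith [arccos_le_pi x]⟩

/-- `b = arccos ((cos c - cos² γ) / sin² γ)` is the apex angle of the isosceles spherical triangle with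
legs `γ` and base `c` (law of cosines `cos c = cos² γ + sin² γ cos b`). -/
lemma sin_half_arccos_mul_sin {γ c : ℝ} (hγ : 0 < sin γ) (hc : 0 ≤ sin (c / 2))
    (hcos : cos (2 * γ) ≤ cos c) :
    sin (arccos ((cos c - cos γ ^ 2) / sin γ ^ 2) / 2) * sin γ = sin (c / 2) := by
  have hpyth := sin_sq_add_cos_sq γ
  have hcos_c : cos c = 1 - 2 * sin (c / 2) ^ 2 := by
    have h := cos_two_mul' (c / 2)
    rw [mul_div_cancel₀ c two_ne_zero] at h
    linarith [sin_sq_add_cos_sq (c / 2)]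
  have hx₁ : -1 ≤ (cos c - cos γ ^ 2) / sin γ ^ 2 := by
    rw [le_div_iff₀ (by positivity)]
    linarith [cos_two_mul' γ]
  have hx₂ : (cos c - cos γ ^ 2) / sin γ ^ 2 ≤ 1 := by
    rw [div_le_one (by positivity)]
    linarith [cos_le_one c]
  have hhalf : (1 - (cos c - cos γ ^ 2) / sin γ ^ 2) / 2 = (sin (c / 2) / sin γ) ^ 2 := by
    field_simp
    linear_combination hpyth - hcos_c
  rw [sin_half_arccos hx₁ hx₂, hhalf, sqrt_sq (by positivity), div_mul_cancel₀ _ hγ.ne']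

lemma sq_add_sq_div_cos_half_eq_one {b γ c : ℝ} (hsin : sin (b / 2) * sin γ = sin (c / 2))
    (hc : cos (c / 2) ≠ 0) :
    (sin (b / 2) * cos γ / cos (c / 2)) ^ 2 + (cos (b / 2) / cos (c / 2)) ^ 2 = 1 := by
  field_simp
  linear_combination sin_sq_add_cos_sq (b / 2) + sin (b / 2) ^ 2 * sin_sq_add_cos_sq γ -
    (sin (b / 2) * sin γ + sin (c / 2)) * hsin - sin_sq_add_cos_sq (c / 2)

lemma tan_half_div_tan_eq {b γ c : ℝ} (hsin : sin (b / 2) * sin γ = sin (c / 2)) (hγ : sin γ ≠ 0) :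
    tan (c / 2) / tan γ = sin (b / 2) * cos γ / cos (c / 2) := by
  rw [tan_eq_sin_div_cos, tan_eq_sin_div_cos, div_div_eq_mul_div, ← hsin]
  field_simp

lemma sqrt_half_one_add_one_sub_double_angle {x y : ℝ} (hy : 0 ≤ y) (h : x ^ 2 + y ^ 2 = 1) :
    √((1 + x) / 2) ^ 2 + √((1 - x) / 2) ^ 2 = 1 ∧ √((1 + x) / 2) ^ 2 - √((1 - x) / 2) ^ 2 = x ∧
      2 * √((1 + x) / 2) * √((1 - x) / 2) = y := by
  have hx : |x| ≤ 1 := by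
    rw [← abs_one, ← sq_le_sq]
    nlinarith
  obtain ⟨hx₁, hx₂⟩ := abs_le.mp hx
  rw [sq_sqrt (by linarith), sq_sqrt (by linarith), mul_assoc, ← sqrt_mul (by linarith)]
  refine ⟨by ring, by ring, ?_⟩
  rw [show (1 + x) / 2 * ((1 - x) / 2) = (y / 2) ^ 2 by linear_combination (-1/4 : ℝ) * h,
    sqrt_sq (by linarith)]
  ring

open Complex in
lemma conj_mexp_σz_σy_σz_eq_mexp_σz {p q b γ c : ℝ} (hpq : p ^ 2 + q ^ 2 = 1)
    (hsin : Real.sin (b / 2) * Real.sin γ = Real.sin (c / 2))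
    (hx : (p ^ 2 - q ^ 2) * Real.cos (c / 2) = Real.sin (b / 2) * Real.cos γ)
    (hy : 2 * p * q * Real.cos (c / 2) = Real.cos (b / 2)) :
    !![I * p, I * q; -q, p] * mexp ((I * ((γ : ℂ) / 2)) • σz) *
        mexp ((((b + π : ℝ) : ℂ) * (I / 2)) • σy) *
        mexp ((I * ((γ : ℂ) / 2)) • σz) * !![I * p, -q; -I * q, -p] =
      mexp ((I * ((c : ℂ) / 2)) • σz) := by
  have hoff : (p ^ 2 - q ^ 2) * Real.cos (b / 2) = 2 * p * q * (Real.sin (b / 2) * Real.cos γ) := by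
    linear_combination 2 * p * q * hx - (p ^ 2 - q ^ 2) * hy
  have hdiag : (p ^ 2 - q ^ 2) * (Real.sin (b / 2) * Real.cos γ) + 2 * p * q * Real.cos (b / 2) =
      Real.cos (c / 2) := by
    linear_combination -(p ^ 2 - q ^ 2) * hx - 2 * p * q * hy +
      Real.cos (c / 2) * (p ^ 2 + q ^ 2 + 1) * hpq
  have hsinγ := Real.sin_two_mul (γ / 2)
  have hcosγ := Real.cos_two_mul' (γ / 2)
  rw [mul_div_cancel₀ γ two_ne_zero] at hsinγ hcosγ
  rw [hsinγ] at hsin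
  rw [hcosγ] at hoff hdiag
  have hpyth := Real.sin_sq_add_cos_sq (γ / 2)
  rw [show I * ((γ : ℂ) / 2) = I * ((γ / 2 : ℝ) : ℂ) by push_cast; ring,
    show I * ((c : ℂ) / 2) = I * ((c / 2 : ℝ) : ℂ) by push_cast; ring,
    show ((b + π : ℝ) : ℂ) * (I / 2) = ((b / 2 + π / 2 : ℝ) : ℂ) * I by push_cast; ring,
    mexp_I_mul_smul_σz, mexp_I_mul_smul_σz, mexp_mul_I_smul_σy, Real.cos_add_pi_div_two,
    Real.sin_add_pi_div_two]
  simp only [Matrix.mul_fin_two]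
  ext i j
  fin_cases i <;> fin_cases j <;>
    simp [Complex.ext_iff, -Complex.ofReal_cos, -Complex.ofReal_sin]
  · constructor
    · linear_combination hdiag + 2 * p * q * Real.cos (b / 2) * hpyth
    · linear_combination hsin + 2 * Real.sin (γ / 2) * Real.cos (γ / 2) * Real.sin (b / 2) * hpq
  · constructor
    · ring
    · linear_combination -hoff - (p ^ 2 - q ^ 2) * Real.cos (b / 2) * hpyth
  · constructor
    · ring
    · linear_combination -hoff - (p ^ 2 - q ^ 2) * Real.cos (b / 2) * hpyth
  · constructor
    · linear_combination hdiag + 2 * p * q * Real.cos (b / 2) * hpyth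
    · linear_combination -hsin - 2 * Real.sin (γ / 2) * Real.cos (γ / 2) * Real.sin (b / 2) * hpq

theorem stmt12 (γ c : ℝ) (hγ : γ ∈ Set.Icc (Real.pi / 4) (Real.pi / 2))
    (hc : c ∈ Set.Ioc 0 (Real.pi / 2))
    (b p q : ℝ)
    (hb : b = Real.arccos ((Real.cos c - (Real.cos γ) ^ 2) / (Real.sin γ) ^ 2))
    (hp : p = Real.sqrt ((1 + Real.tan (c / 2) / Real.tan γ) / 2))
    (hq : q = Real.sqrt ((1 - Real.tan (c / 2) / Real.tan γ) / 2))
    (U₁ U₂ : Matrix (Fin 2) (Fin 2) ℂ)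
    (hU₁ : U₁ = !![Complex.I * p, Complex.I * q; -q, p])
    (hU₂ : U₂ = !![Complex.I * p, -q; -Complex.I * q, -p]) :
    U₁ * mexp ((Complex.I * ((γ : ℂ) / 2)) • σz) *
        mexp ((((b + Real.pi : ℝ) : ℂ) * (Complex.I / 2)) • σy) *
        mexp ((Complex.I * ((γ : ℂ) / 2)) • σz) * U₂ =
      mexp ((Complex.I * ((c : ℂ) / 2)) • σz) := by
  obtain ⟨hγ₁, hγ₂⟩ := hγ
  obtain ⟨hc₁, hc₂⟩ := hc
  have hsinγ : 0 < sin γ := sin_pos_of_pos_of_lt_pi (by linarith [pi_pos]) (by linarith [pi_pos])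
  have hsinc : 0 ≤ sin (c / 2) := sin_nonneg_of_nonneg_of_le_pi (by linarith) (by linarith [pi_pos])
  have hcosc : 0 < cos (c / 2) := cos_pos_of_mem_Ioo ⟨by linarith [pi_pos], by linarith [pi_pos]⟩
  have hcos2γ : cos (2 * γ) ≤ cos c :=
    (cos_nonpos_of_pi_div_two_le_of_le (by linarith) (by linarith)).trans
      (cos_nonneg_of_mem_Icc ⟨by linarith [pi_pos], hc₂⟩)
  have hsin : sin (b / 2) * sin γ = sin (c / 2) := hb ▸ sin_half_arccos_mul_sin hsinγ hsinc hcos2γ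
  have hcosb : 0 ≤ cos (b / 2) := hb ▸ cos_half_arccos_nonneg _
  rw [tan_half_div_tan_eq hsin hsinγ.ne'] at hp hq
  obtain ⟨hpq, hx, hy⟩ := sqrt_half_one_add_one_sub_double_angle (div_nonneg hcosb hcosc.le)
    (sq_add_sq_div_cos_half_eq_one hsin hcosc.ne')
  rw [← hp, ← hq] at hpq hx hy
  rw [hU₁, hU₂]
  refine conj_mexp_σz_σy_σz_eq_mexp_σz hpq hsin ?_ ?_
  · rw [hx, div_mul_cancel₀ _ hcosc.ne']
  · rw [hy, div_mul_cancel₀ _ hcosc.ne']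

end
end

section
/- Let γ > 0 and let n̂ = (n_x, n_y, n_z) be a unit vector in ℝ³ with n_z ≠ ±1, and let U = exp(iγ(n_x σ_x + n_y σ_y + n_z σ_z)). Define U₁ = [[i√((1−n_z)/2), √((1+n_z)/2)], [(n_y−i n_x)/√(2(1−n_z)), (n_x+i n_y)/√(2(1+n_z))]]. Then the Controlled-U gate (block-diag(I, U)) equals (I⊗U₁) · exp(γ(i/2)σ_z⊗σ_z) · (I⊗(exp(−γ(i/2)σ_z)·U₁†)). -/
open Matrix Kronecker

noncomputable section

/-!
The columns of `U₁` are unit eigenvectors of `n̂·σ` for the eigenvalues `-1` and `1`, so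
`U = U₁ exp(-iγσ_z) U₁†`. Because `σ_z ⊗ σ_z` is diagonal, `exp(c σ_z ⊗ σ_z)` is block diagonal
with blocks `exp(c σ_z)` and `exp(-c σ_z)`. Conjugating by `I ⊗ U₁` and multiplying on the right by
`I ⊗ exp(-c σ_z) U₁†` turns these blocks into `I` and `U₁ exp(-2c σ_z) U₁†`, which is `U` for
`c = iγ/2`.
-/

open Complex

lemma Real.sqrt_two_mul_eq_two_mul_sqrt_half (x : ℝ) : √(2 * x) = 2 * √(x / 2) := by
  rw [show 2 * x = 2 ^ 2 * (x / 2) by ring, Real.sqrt_mul (by positivity), Real.sqrt_sq zero_le_two]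

lemma conjTranspose_of_fin_two {α : Type*} [Star α] (p q r s : α) :
    !![p, q; r, s]ᴴ = !![star p, star r; star q, star s] := by
  ext i j; fin_cases i <;> fin_cases j <;> rfl

lemma σz_eq_diagonal : σz = diagonal ![1, -1] := by
  ext i j; fin_cases i <;> fin_cases j <;> rfl

lemma smul_σx_add_smul_σy_add_smul_σz (x y z : ℂ) :
    x • σx + y • σy + z • σz = !![z, x - I * y; x + I * y, -z] := by
  ext i j; fin_cases i <;> fin_cases j <;> simp [σx, σy, σz] <;> ring

section MatrixExp

variable {n : Type*} [Fintype n] [DecidableEq n]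

lemma mexp_diagonal (v : n → ℂ) : mexp (diagonal v) = diagonal fun i => cexp (v i) := by
  simp only [mexp, Matrix.exp_diagonal, Pi.exp_def, Complex.exp_eq_exp_ℂ]

lemma mexp_smul_mul_mexp_smul (A : Matrix n n ℂ) (a b : ℂ) :
    mexp (a • A) * mexp (b • A) = mexp ((a + b) • A) := by
  rw [add_smul, mexp, mexp, mexp, Matrix.exp_add_of_commute]
  exact ((Commute.refl A).smul_left a).smul_right b

lemma mexp_conj_of_mul_eq_one {V W : Matrix n n ℂ} (hVW : V * W = 1) (A : Matrix n n ℂ) :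
    mexp (V * A * W) = V * mexp A * W := by
  rw [← Matrix.inv_eq_right_inv hVW]
  exact Matrix.exp_conj V A (IsUnit.of_mul_eq_one W hVW)

end MatrixExp

lemma mexp_smul_σz_s16 (c : ℂ) : mexp (c • σz) = diagonal ![cexp c, cexp (-c)] := by
  rw [σz_eq_diagonal, ← diagonal_smul, mexp_diagonal]
  congr 1
  ext i
  fin_cases i <;> simp

lemma mexp_smul_σz_kronecker_σz (c : ℂ) :
    mexp (c • (σz ⊗ₖ σz)) =
      !![1, 0; 0, 0] ⊗ₖ mexp (c • σz) + !![0, 0; 0, 1] ⊗ₖ mexp (-c • σz) := by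
  have hP₀ : (!![1, 0; 0, 0] : Matrix (Fin 2) (Fin 2) ℂ) = diagonal ![1, 0] := by
    ext i j; fin_cases i <;> fin_cases j <;> rfl
  have hP₁ : (!![0, 0; 0, 1] : Matrix (Fin 2) (Fin 2) ℂ) = diagonal ![0, 1] := by
    ext i j; fin_cases i <;> fin_cases j <;> rfl
  rw [σz_eq_diagonal, diagonal_kronecker_diagonal, ← diagonal_smul, mexp_diagonal,
    ← σz_eq_diagonal, mexp_smul_σz_s16, mexp_smul_σz_s16, hP₀, hP₁, diagonal_kronecker_diagonal,
    diagonal_kronecker_diagonal, diagonal_add]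
  congr 1
  ext ⟨i, j⟩
  fin_cases i <;> fin_cases j <;> simp

lemma kronecker_add_kronecker_eq_conj_mexp_smul_σz_kronecker_σz {V W : Matrix (Fin 2) (Fin 2) ℂ}
    (hVW : V * W = 1) (c : ℂ) :
    !![1, 0; 0, 0] ⊗ₖ 1 + !![0, 0; 0, 1] ⊗ₖ (V * mexp ((-2 * c) • σz) * W) =
      (1 ⊗ₖ V) * mexp (c • (σz ⊗ₖ σz)) * (1 ⊗ₖ (mexp (-c • σz) * W)) := by
  have hcancel : V * mexp (c • σz) * (mexp (-c • σz) * W) = 1 := by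
    rw [Matrix.mul_assoc, ← Matrix.mul_assoc (mexp _), mexp_smul_mul_mexp_smul, add_neg_cancel,
      zero_smul, mexp, NormedSpace.exp_zero, Matrix.one_mul, hVW]
  have hsquare : V * mexp (-c • σz) * (mexp (-c • σz) * W) = V * mexp ((-2 * c) • σz) * W := by
    rw [Matrix.mul_assoc, ← Matrix.mul_assoc (mexp _), mexp_smul_mul_mexp_smul, ← Matrix.mul_assoc,
      show -c + -c = -2 * c by ring]
  rw [mexp_smul_σz_kronecker_σz, Matrix.mul_add, Matrix.add_mul, ← mul_kronecker_mul,
    ← mul_kronecker_mul, ← mul_kronecker_mul, ← mul_kronecker_mul]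
  simp only [Matrix.one_mul, Matrix.mul_one, hcancel, hsquare]

def blochEigenbasis (nx ny a b : ℝ) : Matrix (Fin 2) (Fin 2) ℂ :=
  !![I * a, b; (ny - I * nx) / (2 * a), (nx + I * ny) / (2 * b)]

section BlochEigenbasis

variable {nx ny nz a b : ℝ} (ha0 : a ≠ 0) (hb0 : b ≠ 0) (ha : a ^ 2 = (1 - nz) / 2)
  (hb : b ^ 2 = (1 + nz) / 2) (hn : nx ^ 2 + ny ^ 2 + nz ^ 2 = 1)
include ha0 hb0 ha hb hn

lemma blochEigenbasis_mul_conjTranspose :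
    blochEigenbasis nx ny a b * (blochEigenbasis nx ny a b)ᴴ = 1 := by
  have ha0' : (a : ℂ) ≠ 0 := by exact_mod_cast ha0
  have hb0' : (b : ℂ) ≠ 0 := by exact_mod_cast hb0
  have ha' : (a : ℂ) ^ 2 = (1 - nz) / 2 := by exact_mod_cast ha
  have hb' : (b : ℂ) ^ 2 = (1 + nz) / 2 := by exact_mod_cast hb
  have hn' : (nx : ℂ) ^ 2 + ny ^ 2 + nz ^ 2 = 1 := by exact_mod_cast hn
  rw [blochEigenbasis, conjTranspose_of_fin_two, mul_fin_two, one_fin_two]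
  simp only [star_mul', star_div₀, star_sub, star_add, star_def, conj_ofReal, conj_I, map_ofNat,
    EmbeddingLike.apply_eq_iff_eq, vecCons_inj, and_true]
  refine ⟨⟨?_, ?_⟩, ?_, ?_⟩ <;> field_simp
  · linear_combination ha' + hb' - a ^ 2 * I_sq
  · linear_combination (nx : ℂ) * I_sq
  · linear_combination (nx : ℂ) * I_sq
  · rw [ha', hb']
    linear_combination hn' + (-nx ^ 2 * (1 + nz) / 2 - ny ^ 2 * (1 - nz) / 2 : ℂ) * I_sq

lemma smul_σx_add_smul_σy_add_smul_σz_mul_blochEigenbasis :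
    ((nx : ℂ) • σx + (ny : ℂ) • σy + (nz : ℂ) • σz) * blochEigenbasis nx ny a b =
      blochEigenbasis nx ny a b * -σz := by
  have ha0' : (a : ℂ) ≠ 0 := by exact_mod_cast ha0
  have hb0' : (b : ℂ) ≠ 0 := by exact_mod_cast hb0
  have ha' : (a : ℂ) ^ 2 = (1 - nz) / 2 := by exact_mod_cast ha
  have hb' : (b : ℂ) ^ 2 = (1 + nz) / 2 := by exact_mod_cast hb
  have hn' : (nx : ℂ) ^ 2 + ny ^ 2 + nz ^ 2 = 1 := by exact_mod_cast hn
  rw [smul_σx_add_smul_σy_add_smul_σz, blochEigenbasis, σz]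
  simp only [neg_of, neg_cons, neg_zero, neg_neg, neg_empty, mul_fin_two, mul_zero, add_zero,
    zero_add, EmbeddingLike.apply_eq_iff_eq, vecCons_inj, and_true]
  refine ⟨⟨?_, ?_⟩, ?_, ?_⟩ <;> field_simp
  · linear_combination 2 * I * (1 + nz) * ha' - I * hn' + (nx * ny : ℂ) * I_sq
  · linear_combination 2 * (nz - 1 : ℂ) * hb' + hn' - (ny ^ 2 : ℂ) * I_sq
  · linear_combination 2 * (I * nx + I ^ 2 * ny) * ha' + (ny * (1 - nz) : ℂ) * I_sq
  · linear_combination 2 * (nx + I * ny) * hb'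

end BlochEigenbasis

theorem stmt16_general (γ nx ny nz : ℝ)
    (hn : nx ^ 2 + ny ^ 2 + nz ^ 2 = 1) (h1 : nz ≠ 1) (h2 : nz ≠ -1)
    (U : Matrix (Fin 2) (Fin 2) ℂ)
    (hU : U = mexp ((Complex.I * (γ : ℂ)) • ((nx : ℂ) • σx + (ny : ℂ) • σy + (nz : ℂ) • σz)))
    (U₁ : Matrix (Fin 2) (Fin 2) ℂ)
    (hU₁ : U₁ = !![Complex.I * Real.sqrt ((1 - nz) / 2), (Real.sqrt ((1 + nz) / 2) : ℂ);
      ((ny : ℂ) - Complex.I * nx) / (Real.sqrt (2 * (1 - nz)) : ℂ),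
      ((nx : ℂ) + Complex.I * ny) / (Real.sqrt (2 * (1 + nz)) : ℂ)])
    (CU : Matrix (Fin 2 × Fin 2) (Fin 2 × Fin 2) ℂ)
    (hCU : CU = (!![1, 0; 0, 0] : Matrix (Fin 2) (Fin 2) ℂ) ⊗ₖ (1 : Matrix (Fin 2) (Fin 2) ℂ) +
      (!![0, 0; 0, 1] : Matrix (Fin 2) (Fin 2) ℂ) ⊗ₖ U) :
    CU = ((1 : Matrix (Fin 2) (Fin 2) ℂ) ⊗ₖ U₁) *
        mexp (((γ : ℂ) * (Complex.I / 2)) • (σz ⊗ₖ σz)) *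
        ((1 : Matrix (Fin 2) (Fin 2) ℂ) ⊗ₖ
          (mexp ((-(γ : ℂ) * (Complex.I / 2)) • σz) * U₁ᴴ)) := by
  have hm : 0 < 1 - nz := sub_pos.2 (lt_of_le_of_ne (by nlinarith) h1)
  have hp : 0 < 1 + nz := by linarith [lt_of_le_of_ne (by nlinarith : -1 ≤ nz) h2.symm]
  have ha0 : √((1 - nz) / 2) ≠ 0 := Real.sqrt_ne_zero'.2 (by linarith)
  have hb0 : √((1 + nz) / 2) ≠ 0 := Real.sqrt_ne_zero'.2 (by linarith)
  have ha : √((1 - nz) / 2) ^ 2 = (1 - nz) / 2 := Real.sq_sqrt (by linarith)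
  have hb : √((1 + nz) / 2) ^ 2 = (1 + nz) / 2 := Real.sq_sqrt (by linarith)
  have hU₁V : U₁ = blochEigenbasis nx ny √((1 - nz) / 2) √((1 + nz) / 2) := by
    rw [hU₁, Real.sqrt_two_mul_eq_two_mul_sqrt_half, Real.sqrt_two_mul_eq_two_mul_sqrt_half]
    push_cast
    rfl
  have hunitary : U₁ * U₁ᴴ = 1 := hU₁V ▸ blochEigenbasis_mul_conjTranspose ha0 hb0 ha hb hn
  have heigen : ((nx : ℂ) • σx + (ny : ℂ) • σy + (nz : ℂ) • σz) * U₁ = U₁ * -σz :=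
    hU₁V ▸ smul_σx_add_smul_σy_add_smul_σz_mul_blochEigenbasis ha0 hb0 ha hb hn
  have hUdiag : U = U₁ * mexp ((-2 * (γ * (I / 2))) • σz) * U₁ᴴ := by
    rw [hU, ← Matrix.mul_one (_ + _), ← hunitary, ← Matrix.mul_assoc, heigen, ← Matrix.smul_mul,
      ← Matrix.mul_smul, ← mexp_conj_of_mul_eq_one hunitary, smul_neg, ← neg_smul,
      show -(I * γ) = -2 * (γ * (I / 2)) by ring]
  rw [hCU, hUdiag, kronecker_add_kronecker_eq_conj_mexp_smul_σz_kronecker_σz hunitary, neg_mul]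

theorem stmt16 (γ nx ny nz : ℝ) (hγ : 0 < γ)
    (hn : nx ^ 2 + ny ^ 2 + nz ^ 2 = 1) (h1 : nz ≠ 1) (h2 : nz ≠ -1)
    (U : Matrix (Fin 2) (Fin 2) ℂ)
    (hU : U = mexp ((Complex.I * (γ : ℂ)) • ((nx : ℂ) • σx + (ny : ℂ) • σy + (nz : ℂ) • σz)))
    (U₁ : Matrix (Fin 2) (Fin 2) ℂ)
    (hU₁ : U₁ = !![Complex.I * Real.sqrt ((1 - nz) / 2), (Real.sqrt ((1 + nz) / 2) : ℂ);
      ((ny : ℂ) - Complex.I * nx) / (Real.sqrt (2 * (1 - nz)) : ℂ),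
      ((nx : ℂ) + Complex.I * ny) / (Real.sqrt (2 * (1 + nz)) : ℂ)])
    (CU : Matrix (Fin 2 × Fin 2) (Fin 2 × Fin 2) ℂ)
    (hCU : CU = (!![1, 0; 0, 0] : Matrix (Fin 2) (Fin 2) ℂ) ⊗ₖ (1 : Matrix (Fin 2) (Fin 2) ℂ) +
      (!![0, 0; 0, 1] : Matrix (Fin 2) (Fin 2) ℂ) ⊗ₖ U) :
    CU = ((1 : Matrix (Fin 2) (Fin 2) ℂ) ⊗ₖ U₁) *
        mexp (((γ : ℂ) * (Complex.I / 2)) • (σz ⊗ₖ σz)) *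
        ((1 : Matrix (Fin 2) (Fin 2) ℂ) ⊗ₖ
          (mexp ((-(γ : ℂ) * (Complex.I / 2)) • σz) * U₁ᴴ)) :=
  stmt16_general γ nx ny nz hn h1 h2 U hU U₁ hU₁ CU hCU
end
end
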